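/- arXiv:2308.09672 — 3 statements merged into one kernel-verified Lean document; each statement's English description precedes it below -/
import Mathlib

section
/- If M is a symmetric r×r real matrix with nonnegative diagonal entries and strictly negative off-diagonal entries, then the minimal eigenvalue of M satisfies: λ_min(M) = sup over entrywise positive vectors v of min over s of (Mv)_s / v_s. -/
open Matrix

/-- For a symmetric diagonally signed matrix `M` (nonnegative diagonal,
strictly negative off-diagonal entries), the minimal eigenvalue satisfies
`λ_min(M) = sup_{v ≻ 0} min_s (Mv)_s / v_s`. -/
theorem min_eigenvalue_sup_min_characterization
    (r : ℕ) (hr : 1 ≤ r) (M : Matrix (Fin r) (Fin r) ℝ)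
    (hM : M.IsHermitian)
    (hdiag : ∀ i, 0 ≤ M i i)
    (hoff : ∀ i j, i ≠ j → M i j < 0) :
    (⨅ i, hM.eigenvalues i) =
      sSup {x : ℝ | ∃ v : Fin r → ℝ, (∀ s, 0 < v s) ∧
        x = ⨅ s, (M.mulVec v) s / v s} := by
  classical
  haveI hne : Nonempty (Fin r) := ⟨⟨0, hr⟩⟩
  set lam : ℝ := ⨅ i, hM.eigenvalues i with hlam
  have hlam_le : ∀ i, lam ≤ hM.eigenvalues i := fun i =>
    ciInf_le (Set.Finite.bddBelow (Set.finite_range _)) i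
  obtain ⟨i0, hi0⟩ : ∃ i0, hM.eigenvalues i0 = lam :=
    exists_eq_ciInf_of_finite
  set u : Fin r → ℝ := ⇑(hM.eigenvectorBasis i0) with hu_def
  have hu : M *ᵥ u = lam • u := by
    rw [hu_def, hM.mulVec_eigenvectorBasis i0, hi0]
  have hu_ne : ∃ s, u s ≠ 0 := by
    by_contra h
    push_neg at h
    exact hM.eigenvectorBasis.orthonormal.ne_zero i0 (by ext s; exact h s)
  set x : Fin r → ℝ := fun s => |u s| with hx_def
  have hx_nonneg : ∀ s, 0 ≤ x s := fun s => abs_nonneg _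
  -- the matrix N = M - lam • 1 is positive semidefinite
  set N : Matrix (Fin r) (Fin r) ℝ := M - lam • 1 with hN_def
  have hVV : (hM.eigenvectorUnitary : Matrix (Fin r) (Fin r) ℝ) *
      (star (hM.eigenvectorUnitary : Matrix (Fin r) (Fin r) ℝ)) = 1 :=
    (Matrix.mem_unitaryGroup_iff).mp (hM.eigenvectorUnitary).2
  have hNps : N.PosSemidef := by
    have h1 : (Matrix.diagonal (fun i => hM.eigenvalues i - lam) :
        Matrix (Fin r) (Fin r) ℝ).PosSemidef :=
      Matrix.posSemidef_diagonal_iff.mpr fun i => sub_nonneg.2 (hlam_le i)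
    have h2 := h1.mul_mul_conjTranspose_same
      (hM.eigenvectorUnitary : Matrix (Fin r) (Fin r) ℝ)
    have key : N = (hM.eigenvectorUnitary : Matrix (Fin r) (Fin r) ℝ) *
        Matrix.diagonal (fun i => hM.eigenvalues i - lam) *
        (hM.eigenvectorUnitary : Matrix (Fin r) (Fin r) ℝ)ᴴ := by
      have hd : (Matrix.diagonal (fun i => hM.eigenvalues i - lam) :
          Matrix (Fin r) (Fin r) ℝ)
          = Matrix.diagonal hM.eigenvalues - lam • 1 := by
        ext i j
        rcases eq_or_ne i j with rfl | h
        · simp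
        · simp [Matrix.diagonal_apply_ne _ h, Matrix.one_apply_ne h]
      rw [hd, Matrix.mul_sub, Matrix.sub_mul, hN_def]
      congr 1
      · have := hM.spectral_theorem
        simpa [Matrix.star_eq_conjTranspose] using this
      · rw [Matrix.mul_smul, Matrix.smul_mul, Matrix.mul_one,
          ← Matrix.star_eq_conjTranspose, hVV]
    rw [key]; exact h2
  have hstar : ∀ y : Fin r → ℝ, star y = y := fun y => funext fun s => rfl
  -- quadratic form comparison
  have hxx : x ⬝ᵥ x = u ⬝ᵥ u :=
    Finset.sum_congr rfl fun s _ => abs_mul_abs_self (u s)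
  have hxMx_le : x ⬝ᵥ (M *ᵥ x) ≤ u ⬝ᵥ (M *ᵥ u) := by
    simp only [dotProduct, Matrix.mulVec, Finset.mul_sum]
    apply Finset.sum_le_sum; intro i _
    apply Finset.sum_le_sum; intro j _
    rcases eq_or_ne i j with rfl | hij
    · refine le_of_eq ?_
      have hxi : x i * x i = u i * u i := abs_mul_abs_self (u i)
      calc x i * (M i i * x i) = M i i * (x i * x i) := by ring
        _ = M i i * (u i * u i) := by rw [hxi]
        _ = u i * (M i i * u i) := by ring
    · have h1 : u i * u j ≤ x i * x j := by
        rw [show x i * x j = |u i| * |u j| from rfl, ← abs_mul]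
        exact le_abs_self _
      have h2 : M i j < 0 := hoff i j hij
      nlinarith [mul_nonneg (neg_nonneg.2 h2.le) (sub_nonneg.2 h1)]
  have hNu : N *ᵥ u = 0 := by
    rw [hN_def, Matrix.sub_mulVec, hu, Matrix.smul_mulVec, Matrix.one_mulVec,
      sub_self]
  have hexp : ∀ y : Fin r → ℝ, y ⬝ᵥ (N *ᵥ y) = y ⬝ᵥ (M *ᵥ y) - lam * (y ⬝ᵥ y) := by
    intro y
    rw [hN_def, Matrix.sub_mulVec, dotProduct_sub, Matrix.smul_mulVec,
      Matrix.one_mulVec, dotProduct_smul, smul_eq_mul]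
  have huNu : u ⬝ᵥ (M *ᵥ u) - lam * (u ⬝ᵥ u) = 0 := by
    rw [← hexp, hNu, dotProduct_zero]
  have hxNx_le : x ⬝ᵥ (N *ᵥ x) ≤ 0 := by
    rw [hexp, hxx]; linarith
  have hxNx_ge : 0 ≤ x ⬝ᵥ (N *ᵥ x) := by
    have := hNps.dotProduct_mulVec_nonneg x
    rwa [hstar x] at this
  have hNx : N *ᵥ x = 0 := by
    have h0 : star x ⬝ᵥ (N *ᵥ x) = 0 := by
      rw [hstar x]; exact le_antisymm hxNx_le hxNx_ge
    exact (hNps.dotProduct_mulVec_zero_iff x).1 h0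
  have hMx : M *ᵥ x = lam • x := by
    have := hNx
    rwa [hN_def, Matrix.sub_mulVec, Matrix.smul_mulVec, Matrix.one_mulVec,
      sub_eq_zero] at this
  -- x is entrywise positive
  have hx_pos : ∀ s, 0 < x s := by
    intro s
    rcases (hx_nonneg s).lt_or_eq with h | h
    · exact h
    · exfalso
      have hxs : x s = 0 := h.symm
      have hs : ∑ j, M s j * x j = 0 := by
        have : (M *ᵥ x) s = 0 := by rw [hMx, Pi.smul_apply, hxs, smul_eq_mul, mul_zero]
        simpa [Matrix.mulVec, dotProduct] using this
      have herase : ∑ j ∈ Finset.univ.erase s, M s j * x j = 0 := by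
        have h' := Finset.add_sum_erase Finset.univ (fun j => M s j * x j)
          (Finset.mem_univ s)
        simp only [hxs, mul_zero, zero_add, hs] at h'
        exact h'
      have hzero : ∀ j, x j = 0 := by
        intro j
        rcases eq_or_ne j s with rfl | hjs
        · exact hxs
        · have hj : j ∈ Finset.univ.erase s := Finset.mem_erase.2 ⟨hjs, Finset.mem_univ j⟩
          have := (Finset.sum_eq_zero_iff_of_nonpos
            (fun j hj => mul_nonpos_of_nonpos_of_nonneg
              (hoff s j (Ne.symm (Finset.mem_erase.1 hj).1)).le (hx_nonneg j))).1 herase j hj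
          have hMsj : M s j ≠ 0 := (hoff s j (Ne.symm hjs)).ne
          exact (mul_eq_zero.1 this).resolve_left hMsj
      obtain ⟨t, ht⟩ := hu_ne
      exact ht (abs_eq_zero.1 (hzero t))
  have hMT : Mᵀ = M := by
    rw [← Matrix.conjTranspose_eq_transpose_of_trivial]; exact hM
  -- every element of the set is at most lam
  have hub : ∀ y ∈ {x : ℝ | ∃ v : Fin r → ℝ, (∀ s, 0 < v s) ∧
      x = ⨅ s, (M.mulVec v) s / v s}, y ≤ lam := by
    rintro y ⟨v, hv, rfl⟩
    set c : ℝ := ⨅ s, (M *ᵥ v) s / v s with hc_def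
    have hxv : 0 < x ⬝ᵥ v :=
      Finset.sum_pos (fun s _ => mul_pos (hx_pos s) (hv s)) Finset.univ_nonempty
    have hc : ∀ s, c * v s ≤ (M *ᵥ v) s := by
      intro s
      have h1 : c ≤ (M *ᵥ v) s / v s :=
        ciInf_le (Set.Finite.bddBelow (Set.finite_range _)) s
      exact (le_div_iff₀ (hv s)).1 h1
    have hsum : c * (x ⬝ᵥ v) ≤ x ⬝ᵥ (M *ᵥ v) := by
      have e1 : x ⬝ᵥ (M *ᵥ v) = ∑ s, x s * (M *ᵥ v) s := rfl
      have e2 : x ⬝ᵥ v = ∑ s, x s * v s := rfl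
      rw [e1, e2, Finset.mul_sum]
      apply Finset.sum_le_sum
      intro s _
      calc c * (x s * v s) = x s * (c * v s) := by ring
        _ ≤ x s * (M *ᵥ v) s := mul_le_mul_of_nonneg_left (hc s) (hx_nonneg s)
    have hswap : x ⬝ᵥ (M *ᵥ v) = lam * (x ⬝ᵥ v) := by
      rw [Matrix.dotProduct_mulVec, ← Matrix.mulVec_transpose, hMT, hMx,
        smul_dotProduct, smul_eq_mul]
    rw [hswap] at hsum
    exact le_of_mul_le_mul_right (by linarith) hxv
  -- lam is in the set
  have hmem : lam ∈ {x : ℝ | ∃ v : Fin r → ℝ, (∀ s, 0 < v s) ∧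
      x = ⨅ s, (M.mulVec v) s / v s} := by
    refine ⟨x, hx_pos, ?_⟩
    have hval : ∀ s, (M *ᵥ x) s / x s = lam := by
      intro s
      rw [hMx, Pi.smul_apply, smul_eq_mul, mul_div_assoc, div_self (hx_pos s).ne',
        mul_one]
    simp only [hval]
    exact (ciInf_const).symm
  exact le_antisymm (le_csSup ⟨lam, hub⟩ hmem) (csSup_le ⟨lam, hmem⟩ hub)
end

section
/- If M is a symmetric r×r diagonally signed matrix, then the eigenspace of the minimal eigenvalue λ_min(M) is one-dimensional and is spanned by a vector with all entries strictly positive. -/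
/-!
Put `A := M - λ_min`, a positive semidefinite matrix with the same negative off-diagonal
entries as `M`, whose kernel is the eigenspace in question. Since the off-diagonal entries are
negative, `|z|ᵀ A |z| ≤ zᵀ A z` for every `z`, so `|z|` lies in the kernel together with `z`.
A nonnegative kernel vector `w` with `w i = 0` vanishes, because `0 = (A w)_i = ∑_{j ≠ i} A i j w j`
is a sum of nonpositive terms. Hence the absolute value of a nonzero kernel vector is strictly
positive, and any kernel vector minus the multiple of it that kills one entry is zero.
-/

open Matrix

namespace Matrix

variable {n : Type*} [Fintype n] {A : Matrix n n ℝ}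

theorem dotProduct_mulVec_abs_le (hoff : ∀ i j, i ≠ j → A i j ≤ 0) (z : n → ℝ) :
    |z| ⬝ᵥ A *ᵥ |z| ≤ z ⬝ᵥ A *ᵥ z := by
  simp only [dotProduct, mulVec, Finset.mul_sum, Pi.abs_apply]
  refine Finset.sum_le_sum fun i _ => Finset.sum_le_sum fun j _ => ?_
  rcases eq_or_ne i j with rfl | hij
  · rw [mul_left_comm, abs_mul_abs_self, mul_left_comm]
  · have : z i * z j ≤ |z i| * |z j| := (le_abs_self _).trans (abs_mul _ _).le
    nlinarith [hoff i j hij]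

theorem PosSemidef.mulVec_abs_eq_zero (hA : A.PosSemidef) (hoff : ∀ i j, i ≠ j → A i j ≤ 0)
    {z : n → ℝ} (hz : A *ᵥ z = 0) : A *ᵥ |z| = 0 := by
  refine (hA.dotProduct_mulVec_zero_iff |z|).1 (le_antisymm ?_ (hA.dotProduct_mulVec_nonneg _))
  calc star |z| ⬝ᵥ A *ᵥ |z| = |z| ⬝ᵥ A *ᵥ |z| := rfl
    _ ≤ z ⬝ᵥ A *ᵥ z := dotProduct_mulVec_abs_le hoff z
    _ = 0 := by rw [hz, dotProduct_zero]

theorem eq_zero_of_mulVec_eq_zero_of_nonneg (hoff : ∀ i j, i ≠ j → A i j < 0) {w : n → ℝ}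
    (hw : A *ᵥ w = 0) (hw0 : 0 ≤ w) {i : n} (hi : w i = 0) : w = 0 := by
  classical
  have hterm : ∀ j ∈ Finset.univ.erase i, A i j * w j ≤ 0 := fun j hj =>
    mul_nonpos_of_nonpos_of_nonneg (hoff i j (Finset.ne_of_mem_erase hj).symm).le (hw0 j)
  have hsum : ∑ j ∈ Finset.univ.erase i, A i j * w j = 0 := by
    have := congrFun hw i
    rwa [mulVec, dotProduct, ← Finset.add_sum_erase _ _ (Finset.mem_univ i), hi, mul_zero,
      zero_add] at this
  funext j
  rcases eq_or_ne j i with rfl | hji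
  · exact hi
  · have := (Finset.sum_eq_zero_iff_of_nonpos hterm).1 hsum j (by simp [hji])
    exact (mul_eq_zero.1 this).resolve_left (hoff i j hji.symm).ne

theorem PosSemidef.eq_zero_of_mulVec_eq_zero_of_apply_eq_zero (hA : A.PosSemidef)
    (hoff : ∀ i j, i ≠ j → A i j < 0) {y : n → ℝ} (hy : A *ᵥ y = 0) {i : n} (hi : y i = 0) :
    y = 0 :=
  (Pi.abs_eq_zero y).1 <|
    eq_zero_of_mulVec_eq_zero_of_nonneg hoff
      (hA.mulVec_abs_eq_zero (fun i j h => (hoff i j h).le) hy) (abs_nonneg y) (i := i)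
      (by simp [hi])

theorem PosSemidef.exists_pos_ker_toLin'_eq_span [DecidableEq n] (hA : A.PosSemidef)
    (hoff : ∀ i j, i ≠ j → A i j < 0) (hker : LinearMap.ker (toLin' A) ≠ ⊥) :
    ∃ v : n → ℝ, (∀ i, 0 < v i) ∧ LinearMap.ker (toLin' A) = Submodule.span ℝ {v} := by
  obtain ⟨u, hu, hu0⟩ := (Submodule.ne_bot_iff _).1 hker
  rw [LinearMap.mem_ker, toLin'_apply] at hu
  have hv : A *ᵥ |u| = 0 := hA.mulVec_abs_eq_zero (fun i j h => (hoff i j h).le) hu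
  have hpos : ∀ i, 0 < |u| i := fun i => (abs_nonneg u i).lt_of_ne' fun hi =>
    hu0 ((Pi.abs_eq_zero u).1 (eq_zero_of_mulVec_eq_zero_of_nonneg hoff hv (abs_nonneg u) hi))
  refine ⟨|u|, hpos, le_antisymm (fun x hx => ?_) ?_⟩
  · rw [LinearMap.mem_ker, toLin'_apply] at hx
    obtain ⟨k, -⟩ := Function.ne_iff.1 hu0
    have hy : A *ᵥ (x - (x k / |u| k) • |u|) = 0 := by
      rw [mulVec_sub, mulVec_smul, hx, hv, smul_zero, sub_zero]
    have hyk : (x - (x k / |u| k) • |u|) k = 0 := by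
      rw [Pi.sub_apply, Pi.smul_apply, smul_eq_mul, div_mul_cancel₀ _ (hpos k).ne', sub_self]
    exact Submodule.mem_span_singleton.2
      ⟨x k / |u| k, (sub_eq_zero.1 (hA.eq_zero_of_mulVec_eq_zero_of_apply_eq_zero hoff hy hyk)).symm⟩
  · rw [Submodule.span_le, Set.singleton_subset_iff, SetLike.mem_coe, LinearMap.mem_ker,
      toLin'_apply, hv]

open scoped MatrixOrder in
theorem IsHermitian.posSemidef_sub_algebraMap [DecidableEq n] {M : Matrix n n ℝ}
    (hM : M.IsHermitian) {c : ℝ} (hc : ∀ i, c ≤ hM.eigenvalues i) :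
    (M - algebraMap ℝ _ c).PosSemidef := by
  refine (sub_nonneg.2 ((algebraMap_le_iff_le_spectrum hM.isSelfAdjoint).2 ?_)).posSemidef
  intro x hx
  obtain ⟨i, rfl⟩ := hM.spectrum_real_eq_range_eigenvalues ▸ hx
  exact hc i

theorem eigenspace_toLin'_eq_ker [DecidableEq n] (M : Matrix n n ℝ) (c : ℝ) :
    Module.End.eigenspace (toLin' M) c = LinearMap.ker (toLin' (M - algebraMap ℝ _ c)) := by
  rw [Module.End.eigenspace_def, map_sub, Algebra.algebraMap_eq_smul_one, map_smul, toLin'_one]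
  rfl

end Matrix

theorem min_eigenspace_one_dim_positive_general
    (r : ℕ) (hr : 1 ≤ r) (M : Matrix (Fin r) (Fin r) ℝ)
    (hM : M.IsHermitian)
    (hoff : ∀ i j, i ≠ j → M i j < 0) :
    ∃ v : Fin r → ℝ, (∀ s, 0 < v s) ∧
      Module.End.eigenspace (Matrix.toLin' M) (⨅ i, hM.eigenvalues i)
        = Submodule.span ℝ {v} := by
  have : Nonempty (Fin r) := ⟨⟨0, hr⟩⟩
  set lam := ⨅ i, hM.eigenvalues i
  have hspec : lam ∈ spectrum ℝ M := by
    obtain ⟨i, hi⟩ : ∃ i, hM.eigenvalues i = lam := exists_eq_ciInf_of_finite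
    exact hi ▸ hM.eigenvalues_mem_spectrum_real i
  have hne : Module.End.eigenspace (toLin' M) lam ≠ ⊥ :=
    Module.End.hasEigenvalue_iff_mem_spectrum.2 (spectrum_toLin' M ▸ hspec)
  have hpsd := hM.posSemidef_sub_algebraMap fun i => ciInf_le (Finite.bddBelow_range _) i
  rw [eigenspace_toLin'_eq_ker] at hne ⊢
  exact hpsd.exists_pos_ker_toLin'_eq_span
    (fun i j hij => by simpa [algebraMap_matrix_apply, hij] using hoff i j hij) hne

/-- For a symmetric diagonally signed matrix `M`, the eigenspace of the
minimal eigenvalue is one-dimensional and spanned by an entrywise strictly positive vector. -/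
theorem min_eigenspace_one_dim_positive
    (r : ℕ) (hr : 1 ≤ r) (M : Matrix (Fin r) (Fin r) ℝ)
    (hM : M.IsHermitian)
    (hdiag : ∀ i, 0 ≤ M i i)
    (hoff : ∀ i j, i ≠ j → M i j < 0) :
    ∃ v : Fin r → ℝ, (∀ s, 0 < v s) ∧
      Module.End.eigenspace (Matrix.toLin' M) (⨅ i, hM.eigenvalues i)
        = Submodule.span ℝ {v} :=
  min_eigenspace_one_dim_positive_general r hr M hM hoff
end

section
/- Let Φ : [q1, 1] → (0,1]^r be C^1 with Φ'_s(q) > 0 and (ξ^s ∘ Φ)'(q) > 0 for all s and q, let f_s(q) = sqrt(Φ'_s(q) / (ξ^s ∘ Φ)'(q)), and suppose there is a function Ψ : [q1,1] → ℝ with f'_s(q) = Ψ(q) Φ'_s(q) for every s and q (the tree-descending ODE). Then for each s the function F_s(q) = 1/f_s(q) + ∫_{q1}^q Σ_{s'} ∂_{s'}ξ^s(Φ(t)) f'_{s'}(t) dt is constant on [q1, 1]. -/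
/-- If `Φ` solves the tree-descending ODE, i.e. `f'_s = Ψ Φ'_s` with
`f_s = sqrt(Φ'_s / (ξ^s∘Φ)')`, then
`F_s(q) = 1/f_s(q) + ∫_{q1}^q Σ_{s'} ∂_{s'}ξ^s(Φ(t)) f'_{s'}(t) dt` is constant on `[q1,1]`. -/
theorem tree_descending_ODE_constant_multiplier
    (r : ℕ) (q1 : ℝ) (hq1 : q1 < 1)
    (ξs : Fin r → (Fin r → ℝ) → ℝ) (hξs : ∀ s, ContDiff ℝ (⊤ : ℕ∞) (ξs s))
    (Φ : ℝ → (Fin r → ℝ)) (hΦ : ContDiff ℝ 2 Φ)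
    (hΦ' : ∀ s, ∀ q ∈ Set.Icc q1 1, 0 < deriv (fun t => Φ t s) q)
    (hξΦ' : ∀ s, ∀ q ∈ Set.Icc q1 1, 0 < deriv (fun t => ξs s (Φ t)) q)
    (f : Fin r → ℝ → ℝ)
    (hf : ∀ s q, f s q =
      Real.sqrt (deriv (fun t => Φ t s) q / deriv (fun t => ξs s (Φ t)) q))
    (Ψ : ℝ → ℝ)
    (hODE : ∀ s, ∀ q ∈ Set.Icc q1 1,
      deriv (f s) q = Ψ q * deriv (fun t => Φ t s) q) :
    ∀ s : Fin r, ∃ c : ℝ, ∀ q ∈ Set.Icc q1 1,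
      (f s q)⁻¹ + (∫ t in q1..q,
        ∑ s' : Fin r, fderiv ℝ (ξs s) (Φ t) (Pi.single s' 1) * deriv (f s') t)
      = c := by
  -- Notation
  set A : Fin r → ℝ → ℝ := fun s' => deriv (fun t => Φ t s') with hAdef
  set B : Fin r → ℝ → ℝ := fun s' => deriv (fun t => ξs s' (Φ t)) with hBdef
  -- smoothness of components
  have hφC : ∀ s', ContDiff ℝ 2 (fun t => Φ t s') := fun s' => (contDiff_pi.mp hΦ) s'
  have hgC : ∀ s', ContDiff ℝ 2 (fun t => ξs s' (Φ t)) := fun s' =>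
    ((hξs s').of_le (show (2 : WithTop ℕ∞) ≤ ((⊤ : ℕ∞) : WithTop ℕ∞) from WithTop.coe_le_coe.mpr le_top)).comp hΦ
  have hAC : ∀ s', ContDiff ℝ 1 (A s') := by
    intro s'
    have h2 : ContDiff ℝ (1 + 1) (fun t => Φ t s') := by
      exact_mod_cast hφC s'
    exact (contDiff_succ_iff_deriv.mp h2).2.2
  have hBC : ∀ s', ContDiff ℝ 1 (B s') := by
    intro s'
    have h2 : ContDiff ℝ (1 + 1) (fun t => ξs s' (Φ t)) := by
      exact_mod_cast hgC s'
    exact (contDiff_succ_iff_deriv.mp h2).2.2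
  -- the open set where everything is positive
  set V : Set ℝ := ⋂ s' : Fin r, ({t | 0 < A s' t} ∩ {t | 0 < B s' t}) with hVdef
  have hVo : IsOpen V := isOpen_iInter_of_finite fun s' =>
    (isOpen_lt continuous_const (hAC s').continuous).inter
      (isOpen_lt continuous_const (hBC s').continuous)
  have hIccV : Set.Icc q1 1 ⊆ V := by
    intro q hq
    exact Set.mem_iInter.2 fun s' => ⟨hΦ' s' q hq, hξΦ' s' q hq⟩
  have hVA : ∀ t ∈ V, ∀ s', 0 < A s' t ∧ 0 < B s' t := fun t ht s' => Set.mem_iInter.1 ht s'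
  -- f s' is C¹ at each point of V
  have hfCAt : ∀ s', ∀ t ∈ V, ContDiffAt ℝ 1 (f s') t := by
    intro s' t ht
    obtain ⟨hAt, hBt⟩ := hVA t ht s'
    have hquot : ContDiffAt ℝ 1 (fun q => A s' q / B s' q) t :=
      ((hAC s').contDiffAt).div ((hBC s').contDiffAt) (ne_of_gt hBt)
    have h := (Real.contDiffAt_sqrt (n := 1) (ne_of_gt (div_pos hAt hBt))).comp t hquot
    have hfe : f s' = fun q => Real.sqrt (A s' q / B s' q) := funext fun q => hf s' q
    rw [hfe]
    exact h
  have hfC : ∀ s', ContDiffOn ℝ 1 (f s') V := fun s' t ht => (hfCAt s' t ht).contDiffWithinAt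
  have hfdiff : ∀ s', ∀ t ∈ V, DifferentiableAt ℝ (f s') t := fun s' t ht =>
    (hfCAt s' t ht).differentiableAt one_ne_zero
  have hderivcont : ∀ s', ContinuousOn (deriv (f s')) V := fun s' =>
    (hfC s').continuousOn_deriv_of_isOpen hVo le_rfl
  have hfpos : ∀ s', ∀ t ∈ V, 0 < f s' t := by
    intro s' t ht
    obtain ⟨hAt, hBt⟩ := hVA t ht s'
    rw [hf]
    exact Real.sqrt_pos.2 (div_pos hAt hBt)
  have hfsq : ∀ s', ∀ t ∈ V, (f s' t) ^ 2 = A s' t / B s' t := by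
    intro s' t ht
    obtain ⟨hAt, hBt⟩ := hVA t ht s'
    rw [hf]
    exact Real.sq_sqrt (le_of_lt (div_pos hAt hBt))
  intro s
  set G : ℝ → ℝ := fun t =>
    ∑ s' : Fin r, fderiv ℝ (ξs s) (Φ t) (Pi.single s' 1) * deriv (f s') t with hGdef
  -- continuity of G on V
  have hGcont : ContinuousOn G V := by
    apply continuousOn_finset_sum
    intro s' _
    have h1 : Continuous fun t => fderiv ℝ (ξs s) (Φ t) (Pi.single s' 1) :=
      (((hξs s).continuous_fderiv (by simp)).comp hΦ.continuous).clm_apply continuous_const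
    exact h1.continuousOn.mul (hderivcont s')
  -- the total function has derivative 0 on Icc
  have key : ∀ x ∈ Set.Icc q1 1,
      HasDerivAt (fun q => (f s q)⁻¹ + ∫ t in q1..q, G t) 0 x := by
    intro x hx
    have hxV : x ∈ V := hIccV hx
    have hdf : HasDerivAt (f s) (deriv (f s) x) x := (hfdiff s x hxV).hasDerivAt
    have h1 : HasDerivAt (fun q => (f s q)⁻¹) (-(deriv (f s) x) / (f s x) ^ 2) x :=
      hdf.inv (ne_of_gt (hfpos s x hxV))
    have hsub : Set.uIcc q1 x ⊆ V := by
      rw [Set.uIcc_of_le hx.1]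
      exact subset_trans (Set.Icc_subset_Icc le_rfl hx.2) hIccV
    have hint : IntervalIntegrable G MeasureTheory.volume q1 x :=
      (hGcont.mono hsub).intervalIntegrable
    have h2 : HasDerivAt (fun u => ∫ t in q1..u, G t) (G x) x :=
      intervalIntegral.integral_hasDerivAt_right hint
        (hGcont.stronglyMeasurableAtFilter hVo x hxV)
        ((hGcont x hxV).continuousAt (hVo.mem_nhds hxV))
    have hsum := h1.add h2
    -- compute the value of the derivative
    have hΦd : HasDerivAt Φ (deriv Φ x) x :=
      (hΦ.differentiable (by norm_num)).differentiableAt.hasDerivAt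
    have hcomp : HasDerivAt (fun t => ξs s (Φ t))
        (fderiv ℝ (ξs s) (Φ x) (deriv Φ x)) x :=
      (((hξs s).differentiable (by simp)).differentiableAt.hasFDerivAt).comp_hasDerivAt x hΦd
    have hAval : ∀ s', deriv Φ x s' = A s' x := fun s' =>
      ((hasDerivAt_pi.1 hΦd) s').deriv.symm
    have hBval : B s x = ∑ s' : Fin r, fderiv ℝ (ξs s) (Φ x) (Pi.single s' 1) * A s' x := by
      rw [hBdef]
      simp only
      rw [hcomp.deriv]
      conv_lhs => rw [← Finset.univ_sum_single (deriv Φ x), map_sum]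
      refine Finset.sum_congr rfl fun s' _ => ?_
      have hone : (Pi.single s' (deriv Φ x s') : Fin r → ℝ) = (deriv Φ x s') • (Pi.single s' 1 : Fin r → ℝ) := by
        funext j
        by_cases h : j = s' <;> simp [Pi.single_apply, h]
      rw [hone, map_smul, smul_eq_mul, hAval, mul_comm]
    have hGx : G x = Ψ x * B s x := by
      rw [hGdef]
      simp only
      rw [hBval, Finset.mul_sum]
      refine Finset.sum_congr rfl fun s' _ => ?_
      rw [hODE s' x hx]
      show fderiv ℝ (ξs s) (Φ x) (Pi.single s' 1) * (Ψ x * A s' x) = _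
      ring
    have hval : -(deriv (f s) x) / (f s x) ^ 2 + G x = 0 := by
      rw [hGx, hODE s x hx, hfsq s x hxV]
      obtain ⟨hAx, hBx⟩ := hVA x hxV s
      field_simp
      ring
    rw [← hval]
    exact hsum
  -- conclude constancy
  refine ⟨(f s q1)⁻¹ + ∫ t in q1..q1, G t, ?_⟩
  intro q hq
  have hcont : ContinuousOn (fun q => (f s q)⁻¹ + ∫ t in q1..q, G t) (Set.Icc q1 1) :=
    fun x hx => (key x hx).continuousAt.continuousWithinAt
  exact constant_of_has_deriv_right_zero hcont
    (fun x hx => (key x (Set.Ico_subset_Icc_self hx)).hasDerivWithinAt) q hq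
end
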